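/- arXiv:math/0605292 — 3 statements merged into one kernel-verified Lean document; each statement's English description precedes it below -/
import Mathlib

section
/- Let L > 0, r ≥ 1 an integer, 0 < a ≤ 1, f(t) = (L/2)·1_{[0,2/L]}(t), and g(t) = (aL/2)·1_{[0,1/(Lr)]}(t) - (aL/2)·1_{(1/(Lr),2/(Lr)]}(t). Then the squared Hellinger distance h²(f, f+g) = (1/2)∫(√f - √(f+g))² satisfies h²(f, f+g) = 1/r - (√(1+a) + √(1-a))/(2r) ≤ a²/(2r). -/
open MeasureTheory

/-!
The perturbation `g` lives inside the support of `f`, where `f ≡ L/2`, so the Hellinger integrand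
is the constant `(L/2)(1 - √(1 ± a))²` on each of the two intervals of length `1/(Lr)` and vanishes
elsewhere; adding up gives `h² = (2 - √(1+a) - √(1-a)) / (2r)`. The bound `a²/(2r)` comes from
`√y ≥ y(3 - y)/2`, i.e. `√(1+x) ≥ (1+x)(1-x/2)`, applied at `x = ±a`: the two right-hand sides
add up to `2 - a²`.
-/

theorem Real.mul_three_sub_div_two_le_sqrt {y : ℝ} (hy : 0 ≤ y) : y * (3 - y) / 2 ≤ √y := by
  obtain ⟨s, hs, rfl⟩ : ∃ s : ℝ, 0 ≤ s ∧ y = s ^ 2 :=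
    ⟨√y, Real.sqrt_nonneg y, (Real.sq_sqrt hy).symm⟩
  rw [Real.sqrt_sq hs]
  nlinarith [mul_nonneg (sq_nonneg (s - 1)) (by positivity : (0 : ℝ) ≤ s + 2)]

theorem two_sub_sq_le_sqrt_one_add_add_sqrt_one_sub {a : ℝ} (ha₀ : -1 ≤ a) (ha₁ : a ≤ 1) :
    2 - a ^ 2 ≤ √(1 + a) + √(1 - a) := by
  have h₁ := Real.mul_three_sub_div_two_le_sqrt (y := 1 + a) (by linarith)
  have h₂ := Real.mul_three_sub_div_two_le_sqrt (y := 1 - a) (by linarith)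
  nlinarith

theorem Real.sq_sqrt_sub_sqrt_mul {c : ℝ} (hc : 0 ≤ c) (y : ℝ) :
    (√c - √(c * y)) ^ 2 = c * (1 - √y) ^ 2 := by
  rw [Real.sqrt_mul hc]
  linear_combination (1 - √y) ^ 2 * Real.sq_sqrt hc

section StepPerturbation

variable {α : Type*} {J I₁ I₂ : Set α} {c d₁ d₂ : ℝ} {f g : α → ℝ}

theorem sq_sqrt_sub_sqrt_add_eq_indicator (hI₁ : I₁ ⊆ J) (hI₂ : I₂ ⊆ J) (hI : Disjoint I₁ I₂)
    (hf : ∀ t, f t = c * J.indicator (fun _ => 1) t)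
    (hg : ∀ t, g t = d₁ * I₁.indicator (fun _ => 1) t + d₂ * I₂.indicator (fun _ => 1) t)
    (t : α) :
    (√(f t) - √(f t + g t)) ^ 2 =
      I₁.indicator (fun _ => (√c - √(c + d₁)) ^ 2) t +
        I₂.indicator (fun _ => (√c - √(c + d₂)) ^ 2) t := by
  rw [hf, hg]
  by_cases h₁ : t ∈ I₁
  · have h₂ : t ∉ I₂ := Set.disjoint_left.mp hI h₁
    simp [h₁, h₂, hI₁ h₁]
  by_cases h₂ : t ∈ I₂
  · simp [h₁, h₂, hI₂ h₂]
  · simp [h₁, h₂]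

theorem integral_sq_sqrt_sub_sqrt_add [MeasurableSpace α] (μ : Measure α)
    (hI₁ : I₁ ⊆ J) (hI₂ : I₂ ⊆ J) (hI : Disjoint I₁ I₂) (hm₁ : MeasurableSet I₁) (hm₂ : MeasurableSet I₂)
    (hμ₁ : μ I₁ ≠ ⊤) (hμ₂ : μ I₂ ≠ ⊤)
    (hf : ∀ t, f t = c * J.indicator (fun _ => 1) t)
    (hg : ∀ t, g t = d₁ * I₁.indicator (fun _ => 1) t + d₂ * I₂.indicator (fun _ => 1) t) :
    ∫ t, (√(f t) - √(f t + g t)) ^ 2 ∂μ =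
      (√c - √(c + d₁)) ^ 2 * μ.real I₁ + (√c - √(c + d₂)) ^ 2 * μ.real I₂ := by
  simp_rw [sq_sqrt_sub_sqrt_add_eq_indicator hI₁ hI₂ hI hf hg]
  rw [integral_add ((integrable_indicator_iff hm₁).mpr (integrableOn_const hμ₁))
    ((integrable_indicator_iff hm₂).mpr (integrableOn_const hμ₂)),
    integral_indicator_const _ hm₁, integral_indicator_const _ hm₂, smul_eq_mul, smul_eq_mul,
    mul_comm (μ.real I₁), mul_comm (μ.real I₂)]

end StepPerturbation

theorem hellinger_computation
    (L a : ℝ) (r : ℕ) (hL : 0 < L) (hr : 1 ≤ r) (ha0 : 0 < a) (ha1 : a ≤ 1)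
    (f g : ℝ → ℝ)
    (hf : ∀ t, f t = (L / 2) * Set.indicator (Set.Icc 0 (2 / L)) (fun _ => (1 : ℝ)) t)
    (hg : ∀ t, g t = (a * L / 2) * Set.indicator (Set.Icc 0 (1 / (L * r))) (fun _ => (1 : ℝ)) t
        - (a * L / 2) * Set.indicator (Set.Ioc (1 / (L * r)) (2 / (L * r))) (fun _ => (1 : ℝ)) t) :
    (1 / 2) * (∫ t, (Real.sqrt (f t) - Real.sqrt (f t + g t)) ^ 2)
        = 1 / r - (Real.sqrt (1 + a) + Real.sqrt (1 - a)) / (2 * r) ∧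
    (1 / 2) * (∫ t, (Real.sqrt (f t) - Real.sqrt (f t + g t)) ^ 2) ≤ a ^ 2 / (2 * r) := by
  have hr' : (1 : ℝ) ≤ r := by exact_mod_cast hr
  have hLr : 0 < L * r := by positivity
  have hle : 2 / (L * r) ≤ 2 / L := by gcongr; nlinarith
  have hint := integral_sq_sqrt_sub_sqrt_add volume
    (J := Set.Icc 0 (2 / L)) (g := g) (d₁ := a * L / 2) (d₂ := -(a * L / 2))
    (Set.Icc_subset_Icc le_rfl ((div_le_div_of_nonneg_right one_le_two hLr.le).trans hle))
    (fun t ht => ⟨(by positivity : (0 : ℝ) ≤ 1 / (L * r)).trans ht.1.le, ht.2.trans hle⟩)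
    (Set.disjoint_left.mpr fun t h₁ h₂ => h₂.1.not_ge h₁.2)
    measurableSet_Icc measurableSet_Ioc measure_Icc_lt_top.ne measure_Ioc_lt_top.ne hf
    (fun t => by rw [hg]; ring)
  have hvol₁ : volume.real (Set.Icc 0 (1 / (L * r))) = 1 / (L * r) := by
    rw [Real.volume_real_Icc_of_le (by positivity), sub_zero]
  have hvol₂ : volume.real (Set.Ioc (1 / (L * r)) (2 / (L * r))) = 1 / (L * r) := by
    rw [Real.volume_real_Ioc_of_le (by gcongr; norm_num)]; ring
  rw [hvol₁, hvol₂, show L / 2 + a * L / 2 = L / 2 * (1 + a) by ring,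
    show L / 2 + -(a * L / 2) = L / 2 * (1 - a) by ring,
    Real.sq_sqrt_sub_sqrt_mul (by positivity), Real.sq_sqrt_sub_sqrt_mul (by positivity)] at hint
  have hval : 1 / 2 * ∫ t, (√(f t) - √(f t + g t)) ^ 2
      = 1 / r - (√(1 + a) + √(1 - a)) / (2 * r) := by
    rw [hint]
    field_simp
    linear_combination
      Real.sq_sqrt (by linarith : 0 ≤ 1 + a) + Real.sq_sqrt (by linarith : 0 ≤ 1 - a)
  refine ⟨hval, ?_⟩
  rw [hval, show 1 / (r : ℝ) - (√(1 + a) + √(1 - a)) / (2 * r)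
      = (2 - (√(1 + a) + √(1 - a))) / (2 * r) by field_simp]
  gcongr
  linarith [two_sub_sq_le_sqrt_one_add_add_sqrt_one_sub (by linarith : -1 ≤ a) ha1]
end

section
/- Let φ₁,…,φ_{M'} be an orthonormal family in L₂(ℝ^d), let X₁,…,Xₙ be i.i.d. with density p ∈ L₂(ℝ^d) satisfying ‖p‖_∞ ≤ L, and set λ̂ⱼ = (1/n)∑ᵢ φⱼ(Xᵢ), λⱼ* = ∫ φⱼ p. Let p̃ = ∑ⱼ λ̂ⱼ φⱼ and let p*_𝓛 = ∑ⱼ λⱼ* φⱼ be the orthogonal projection of p onto the span 𝓛 of the φⱼ. Then E‖p̃ - p‖²₂ ≤ min_{q ∈ 𝓛} ‖q - p‖²₂ + L·M'/n. -/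
/-!
For every coefficient vector `c`, Pythagoras in `L²` relative to the orthonormal family gives
`‖∑ⱼ cⱼ φⱼ - p‖² = ∑ⱼ (cⱼ - λⱼ*)² + (‖p‖² - ∑ⱼ λⱼ*²)`. Hence the best approximation error over `𝓛`
is the last bracket, and the risk of `p̃` exceeds it by `∑ⱼ E (λ̂ⱼ - λⱼ*)²`. Each `λ̂ⱼ` is the
mean of `n` independent copies of `φⱼ(X)`, whose mean is `λⱼ*`, so `E (λ̂ⱼ - λⱼ*)²` is
`Var φⱼ(X) / n ≤ E φⱼ(X)² / n = ∫ φⱼ² p / n ≤ L / n`: the law of `X` is dominated by `L • volume`.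
-/

open MeasureTheory ProbabilityTheory
open scoped InnerProductSpace ENNReal

theorem Orthonormal.norm_sum_smul_sub_sq {ι E : Type*} [Fintype ι] [NormedAddCommGroup E]
    [InnerProductSpace ℝ E] {e : ι → E} (he : Orthonormal ℝ e) (c : ι → ℝ) (v : E) :
    ‖∑ i, c i • e i - v‖ ^ 2 = ∑ i, (c i - ⟪e i, v⟫_ℝ) ^ 2 + (‖v‖ ^ 2 - ∑ i, ⟪e i, v⟫_ℝ ^ 2) := by
  have hnorm : ‖∑ i, c i • e i‖ ^ 2 = ∑ i, c i ^ 2 := by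
    rw [← real_inner_self_eq_norm_sq, he.inner_sum]
    simp [sq]
  have hinner : ⟪∑ i, c i • e i, v⟫_ℝ = ∑ i, c i * ⟪e i, v⟫_ℝ := by
    simp [sum_inner, real_inner_smul_left]
  rw [norm_sub_sq_real, hnorm, hinner]
  simp only [sub_sq, Finset.sum_add_distrib, Finset.sum_sub_distrib, mul_assoc, ← Finset.mul_sum]
  ring

namespace MeasureTheory

variable {α : Type*} [MeasurableSpace α] {μ : Measure α}

theorem MemLp.toLp_sum {ι E : Type*} [NormedAddCommGroup E] {p : ℝ≥0∞} (s : Finset ι)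
    {f : ι → α → E} (hf : ∀ i, MemLp (f i) p μ) :
    (memLp_finsetSum' s fun i _ => hf i).toLp (∑ i ∈ s, f i) = ∑ i ∈ s, (hf i).toLp (f i) := by
  classical
  induction s using Finset.induction_on with
  | empty => simp [MemLp.toLp_zero]
  | insert i s hi ih =>
    conv_rhs => rw [Finset.sum_insert hi, ← ih, ← MemLp.toLp_add]
    exact MemLp.toLp_congr _ _ (.of_eq (Finset.sum_insert hi))

theorem integral_mul_eq_inner_toLp {f g : α → ℝ} (hf : MemLp f 2 μ) (hg : MemLp g 2 μ) :
    ∫ x, f x * g x ∂μ = ⟪hf.toLp f, hg.toLp g⟫_ℝ := by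
  rw [L2.inner_def]
  refine integral_congr_ae ?_
  filter_upwards [hf.coeFn_toLp, hg.coeFn_toLp] with x hfx hgx
  simp [hfx, hgx, mul_comm]

theorem integral_sq_eq_norm_toLp_sq {f : α → ℝ} (hf : MemLp f 2 μ) :
    ∫ x, f x ^ 2 ∂μ = ‖hf.toLp f‖ ^ 2 := by
  simp_rw [sq, integral_mul_eq_inner_toLp hf hf, real_inner_self_eq_norm_mul_norm]

theorem integral_sq_sum_mul_sub_eq {ι : Type*} [Fintype ι] [DecidableEq ι] {φ : ι → α → ℝ}
    (hφ : ∀ i, MemLp (φ i) 2 μ)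
    (horth : ∀ i j, ∫ x, φ i x * φ j x ∂μ = if i = j then 1 else 0)
    {p : α → ℝ} (hp : MemLp p 2 μ) (c : ι → ℝ) :
    ∫ x, (∑ i, c i * φ i x - p x) ^ 2 ∂μ =
      ∑ i, (c i - ∫ x, φ i x * p x ∂μ) ^ 2 +
        (∫ x, p x ^ 2 ∂μ - ∑ i, (∫ x, φ i x * p x ∂μ) ^ 2) := by
  set e := fun i => (hφ i).toLp (φ i)
  have he : Orthonormal ℝ e := orthonormal_iff_ite.2 fun i j => by
    rw [← integral_mul_eq_inner_toLp, horth]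
  have hcφ : ∀ i, MemLp (c i • φ i) 2 μ := fun i => (hφ i).const_smul (c i)
  have hsum := memLp_finsetSum' Finset.univ fun i _ => hcφ i
  have hF := hsum.sub hp
  have htoLp : hF.toLp (∑ i, c i • φ i - p) = ∑ i, c i • e i - hp.toLp p := by
    rw [MemLp.toLp_sub hsum hp, MemLp.toLp_sum Finset.univ hcφ]
    exact congrArg (· - _) (Finset.sum_congr rfl fun i _ => MemLp.toLp_const_smul (c i) (hφ i))
  have hpoint :
      (fun x => (∑ i, c i * φ i x - p x) ^ 2) = fun x => (∑ i, c i • φ i - p) x ^ 2 := by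
    ext x
    simp only [Pi.sub_apply, Finset.sum_apply, Pi.smul_apply, smul_eq_mul]
  simp_rw [hpoint, integral_sq_eq_norm_toLp_sq hF, htoLp, he.norm_sum_smul_sub_sq,
    integral_sq_eq_norm_toLp_sq hp, integral_mul_eq_inner_toLp (hφ _) hp, e]

theorem iInf_integral_sq_sum_mul_sub_eq {ι : Type*} [Fintype ι] [DecidableEq ι]
    {φ : ι → α → ℝ} (hφ : ∀ i, MemLp (φ i) 2 μ)
    (horth : ∀ i j, ∫ x, φ i x * φ j x ∂μ = if i = j then 1 else 0)
    {p : α → ℝ} (hp : MemLp p 2 μ) :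
    ⨅ c : ι → ℝ, ∫ x, (∑ i, c i * φ i x - p x) ^ 2 ∂μ =
      ∫ x, p x ^ 2 ∂μ - ∑ i, (∫ x, φ i x * p x ∂μ) ^ 2 := by
  simp_rw [integral_sq_sum_mul_sub_eq hφ horth hp]
  have hge : ∀ c : ι → ℝ, ∫ x, p x ^ 2 ∂μ - ∑ i, (∫ x, φ i x * p x ∂μ) ^ 2 ≤
      ∑ i, (c i - ∫ x, φ i x * p x ∂μ) ^ 2 +
        (∫ x, p x ^ 2 ∂μ - ∑ i, (∫ x, φ i x * p x ∂μ) ^ 2) :=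
    fun c => le_add_of_nonneg_left (Finset.sum_nonneg fun i _ => sq_nonneg _)
  refine le_antisymm ?_ (le_ciInf hge)
  exact (ciInf_le ⟨_, Set.forall_mem_range.2 hge⟩ fun i => ∫ x, φ i x * p x ∂μ).trans (by simp)

theorem withDensity_ofReal_le_smul {p : α → ℝ} {L : ℝ} (hpL : ∀ x, p x ≤ L) :
    μ.withDensity (fun x => ENNReal.ofReal (p x)) ≤ ENNReal.ofReal L • μ := by
  rw [← withDensity_const]
  exact withDensity_mono (.of_forall fun x => ENNReal.ofReal_le_ofReal (hpL x))

theorem integral_withDensity_ofReal {p : α → ℝ} (hp : AEMeasurable p μ) (hp0 : 0 ≤ᵐ[μ] p)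
    (g : α → ℝ) :
    ∫ x, g x ∂μ.withDensity (fun x => ENNReal.ofReal (p x)) = ∫ x, p x * g x ∂μ := by
  rw [integral_withDensity_eq_integral_toReal_smul₀ hp.ennreal_ofReal
    (.of_forall fun _ => ENNReal.ofReal_lt_top)]
  refine integral_congr_ae ?_
  filter_upwards [hp0] with x hx
  simp [ENNReal.toReal_ofReal hx]

end MeasureTheory

namespace ProbabilityTheory

variable {Ω E : Type*} [MeasurableSpace Ω] [MeasurableSpace E] {P : Measure Ω} {n : ℕ}
  {X : Fin n → Ω → E} {ν : Measure E} {f : E → ℝ}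

theorem memLp_sampleMean (hX : ∀ i, AEMeasurable (X i) P) (hlaw : ∀ i, P.map (X i) = ν)
    (hf : MemLp f 2 ν) : MemLp (fun ω => 1 / (n : ℝ) * ∑ i, f (X i ω)) 2 P := by
  have hcomp : ∀ i, MemLp (f ∘ X i) 2 P := fun i => (hlaw i ▸ hf).comp_of_map (hX i)
  exact (memLp_finsetSum Finset.univ fun i _ => hcomp i).const_mul _

theorem integral_sampleMean (hn : 0 < n) (hX : ∀ i, AEMeasurable (X i) P)
    (hlaw : ∀ i, P.map (X i) = ν) (hf : Integrable f ν) :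
    ∫ ω, 1 / (n : ℝ) * ∑ i, f (X i ω) ∂P = ∫ x, f x ∂ν := by
  have hcomp : ∀ i, ∫ ω, f (X i ω) ∂P = ∫ x, f x ∂ν := fun i => by
    rw [← hlaw i, integral_map (hX i) (hlaw i ▸ hf.aestronglyMeasurable)]
  rw [integral_const_mul, integral_finsetSum _ fun i _ => (hlaw i ▸ hf).comp_aemeasurable (hX i)]
  simp only [hcomp, Finset.sum_const, Finset.card_univ, Fintype.card_fin, nsmul_eq_mul]
  field_simp

theorem variance_sampleMean (hX : ∀ i, AEMeasurable (X i) P)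
    (hindep : Pairwise fun i j => IndepFun (X i) (X j) P) (hlaw : ∀ i, P.map (X i) = ν)
    (hf : MemLp f 2 ν) :
    Var[fun ω => 1 / (n : ℝ) * ∑ i, f (X i ω); P] = Var[f; ν] / n := by
  have hcomp : ∀ i, MemLp (f ∘ X i) 2 P := fun i => (hlaw i ▸ hf).comp_of_map (hX i)
  have hsum : Var[fun ω => ∑ i, f (X i ω); P] = n * Var[f; ν] := by
    have hfX : (fun ω => ∑ i, f (X i ω)) = ∑ i, f ∘ X i := by ext; simp
    have hfm : ∀ i, AEMeasurable f (P.map (X i)) := fun i => hlaw i ▸ hf.aemeasurable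
    rw [hfX, IndepFun.variance_sum (fun i _ => hcomp i)
      fun i _ j _ hij => (hindep hij).comp₀ (hX i) (hX j) (hfm i) (hfm j)]
    simp only [← variance_map (hfm _) (hX _), hlaw, Finset.sum_const, Finset.card_univ,
      Fintype.card_fin, nsmul_eq_mul]
  rw [variance_const_mul, hsum]
  rcases eq_or_ne n 0 with rfl | hn
  · simp
  · field_simp

theorem integral_sq_sampleMean_sub_le [IsProbabilityMeasure P] (hn : 0 < n)
    (hX : ∀ i, AEMeasurable (X i) P) (hindep : Pairwise fun i j => IndepFun (X i) (X j) P)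
    (hlaw : ∀ i, P.map (X i) = ν) (hf : MemLp f 2 ν) :
    ∫ ω, (1 / (n : ℝ) * ∑ i, f (X i ω) - ∫ x, f x ∂ν) ^ 2 ∂P ≤ (∫ x, f x ^ 2 ∂ν) / n := by
  have : IsProbabilityMeasure ν := hlaw ⟨0, hn⟩ ▸ Measure.isProbabilityMeasure_map (hX _)
  rw [← integral_sampleMean hn hX hlaw (hf.integrable one_le_two),
    ← variance_eq_integral (memLp_sampleMean hX hlaw hf).aemeasurable,
    variance_sampleMean hX hindep hlaw hf]
  gcongr
  exact variance_le_expectation_sq hf.aestronglyMeasurable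

theorem integral_sq_sampleMean_sub_le_of_le_smul [IsProbabilityMeasure P] (hn : 0 < n)
    (hX : ∀ i, AEMeasurable (X i) P) (hindep : Pairwise fun i j => IndepFun (X i) (X j) P)
    (hlaw : ∀ i, P.map (X i) = ν) {μ : Measure E} {c : ℝ≥0∞} (hc : c ≠ ∞) (hν : ν ≤ c • μ)
    (hf : MemLp f 2 μ) :
    ∫ ω, (1 / (n : ℝ) * ∑ i, f (X i ω) - ∫ x, f x ∂ν) ^ 2 ∂P ≤
      c.toReal * (∫ x, f x ^ 2 ∂μ) / n := by
  refine (integral_sq_sampleMean_sub_le hn hX hindep hlaw (hf.of_measure_le_smul hc hν)).trans ?_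
  rw [← smul_eq_mul, ← integral_smul_measure]
  exact div_le_div_of_nonneg_right (integral_mono_measure hν (.of_forall fun x => sq_nonneg _)
    (hf.integrable_sq.smul_measure hc)) n.cast_nonneg

end ProbabilityTheory

theorem linear_aggregation_oracle_inequality_general
    (d n M' : ℕ) (hn : 0 < n)
    {Ω : Type*} [MeasurableSpace Ω] (P : Measure Ω) [IsProbabilityMeasure P]
    (X : Fin n → Ω → EuclideanSpace ℝ (Fin d))
    (hXmeas : ∀ i, Measurable (X i))
    (hindep : iIndepFun X P)
    (p : EuclideanSpace ℝ (Fin d) → ℝ) (L : ℝ)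
    (hp_nonneg : ∀ x, 0 ≤ p x)
    (hp_bdd : ∀ x, p x ≤ L)
    (hpL2 : MemLp p 2 volume)
    (hlaw : ∀ i, Measure.map (X i) P
        = volume.withDensity (fun x => ENNReal.ofReal (p x)))
    (φ : Fin M' → EuclideanSpace ℝ (Fin d) → ℝ)
    (hφL2 : ∀ j, MemLp (φ j) 2 volume)
    (horth : ∀ j k, (∫ x, φ j x * φ k x) = if j = k then 1 else 0) :
    (∫ ω, ∫ x, ((∑ j, ((1 / (n : ℝ)) * ∑ i, φ j (X i ω)) * φ j x) - p x) ^ 2 ∂volume ∂P)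
      ≤ (⨅ c : Fin M' → ℝ, ∫ x, ((∑ j, c j * φ j x) - p x) ^ 2) + L * M' / n := by
  set ν := volume.withDensity fun x => ENNReal.ofReal (p x)
  set coef : Fin M' → ℝ := fun j => ∫ x, φ j x * p x
  set coefHat : Fin M' → Ω → ℝ := fun j ω => 1 / (n : ℝ) * ∑ i, φ j (X i ω)
  have hL : 0 ≤ L := (hp_nonneg 0).trans (hp_bdd 0)
  have hνle : ν ≤ ENNReal.ofReal L • volume := withDensity_ofReal_le_smul hp_bdd
  have hmean : ∀ j, ∫ x, φ j x ∂ν = coef j := fun j => by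
    rw [integral_withDensity_ofReal hpL2.aestronglyMeasurable.aemeasurable
      (.of_forall hp_nonneg)]
    exact integral_congr_ae (.of_forall fun x => mul_comm _ _)
  have hnorm : ∀ j, ∫ x, φ j x ^ 2 = 1 := fun j => by simpa [sq] using horth j j
  have hX : ∀ i, AEMeasurable (X i) P := fun i => (hXmeas i).aemeasurable
  have hpair : Pairwise fun i k => IndepFun (X i) (X k) P := fun _ _ => hindep.indepFun
  have hdev : ∀ j, ∫ ω, (coefHat j ω - coef j) ^ 2 ∂P ≤ L / n := fun j => by
    rw [← hmean j]
    refine (integral_sq_sampleMean_sub_le_of_le_smul hn hX hpair hlaw ENNReal.ofReal_ne_top hνle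
      (hφL2 j)).trans_eq ?_
    rw [hnorm, ENNReal.toReal_ofReal hL, mul_one]
  have hdev_int : ∀ j, Integrable (fun ω => (coefHat j ω - coef j) ^ 2) P := fun j =>
    ((memLp_sampleMean hX hlaw ((hφL2 j).of_measure_le_smul ENNReal.ofReal_ne_top hνle)).sub
      (memLp_const _)).integrable_sq
  rw [iInf_integral_sq_sum_mul_sub_eq hφL2 horth hpL2]
  set K := (∫ x, p x ^ 2) - ∑ j, coef j ^ 2
  calc _ = ∫ ω, (∑ j, (coefHat j ω - coef j) ^ 2 + K) ∂P := by
        simp_rw [integral_sq_sum_mul_sub_eq hφL2 horth hpL2]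
        rfl
    _ = ∑ j, ∫ ω, (coefHat j ω - coef j) ^ 2 ∂P + K := by
        rw [integral_add (integrable_finsetSum _ fun j _ => hdev_int j) (integrable_const K),
          integral_finsetSum _ fun j _ => hdev_int j, integral_const, probReal_univ, one_smul]
    _ ≤ ∑ _j : Fin M', L / n + K := by gcongr with j; exact hdev j
    _ = K + L * M' / n := by
        rw [Finset.sum_const, Finset.card_univ, Fintype.card_fin, nsmul_eq_mul]
        ring

theorem linear_aggregation_oracle_inequality
    (d n M' : ℕ) (hn : 0 < n)
    {Ω : Type*} [MeasurableSpace Ω] (P : Measure Ω) [IsProbabilityMeasure P]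
    (X : Fin n → Ω → EuclideanSpace ℝ (Fin d))
    (hXmeas : ∀ i, Measurable (X i))
    (hindep : iIndepFun X P)
    (p : EuclideanSpace ℝ (Fin d) → ℝ) (L : ℝ)
    (hp_nonneg : ∀ x, 0 ≤ p x) (hp_meas : Measurable p)
    (hp_int : (∫ x, p x) = 1) (hp_bdd : ∀ x, p x ≤ L)
    (hpL2 : MemLp p 2 volume)
    (hlaw : ∀ i, Measure.map (X i) P
        = volume.withDensity (fun x => ENNReal.ofReal (p x)))
    (φ : Fin M' → EuclideanSpace ℝ (Fin d) → ℝ)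
    (hφL2 : ∀ j, MemLp (φ j) 2 volume)
    (horth : ∀ j k, (∫ x, φ j x * φ k x) = if j = k then 1 else 0) :
    (∫ ω, ∫ x, ((∑ j, ((1 / (n : ℝ)) * ∑ i, φ j (X i ω)) * φ j x) - p x) ^ 2 ∂volume ∂P)
      ≤ (⨅ c : Fin M' → ℝ, ∫ x, ((∑ j, c j * φ j x) - p x) ^ 2) + L * M' / n :=
  linear_aggregation_oracle_inequality_general d n M' hn P X hXmeas hindep p L hp_nonneg hp_bdd hpL2
    hlaw φ hφL2 horth
end

section
/- Let p have characteristic function φ and K satisfy 0 ≤ 𝓕[K] ≤ 1 with the monotonicity property 𝓕[K](h't) ≥ 𝓕[K](ht) for all t ∈ ℝ^d whenever 0 < h' < h. Then for any h > h' > 0, R_n(h) ≥ R_n(h') - (1/(n(2π)^d)) ∫ (1 - |φ(t)|²) |𝓕[K](h't)|² dt ≥ R_n(h') - ‖K‖²₂/(n (h')^d), where R_n(h) = (1/(2π)^d)∫[|1-𝓕[K](ht)|²|φ(t)|² + (1/n)(1-|φ(t)|²)|𝓕[K](ht)|²]dt. -/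
/-!
Monotonicity gives `𝓕[K](ht) ≤ 𝓕[K](h't) ≤ 1`, so the bias integrand at `h` dominates the one at
`h'` pointwise, while the variance integrand at `h` is nonnegative; this is the first inequality.
For the second, `1 - |φ|² ≤ 1` and Plancherel's theorem in the rescaled form
`∫ 𝓕[K](h't)² dt = (2π/h')^d ‖K‖₂²`. Plancherel holds for the `L²` Fourier transform, which agrees
a.e. with the Fourier integral of an `L¹ ∩ L²` function because both define the same tempered
distribution; if `K ∉ L¹`, the Fourier integral is the junk value `0` and the bound is trivial.
-/

open MeasureTheory FourierTransform SchwartzMap Complex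
open scoped Real RealInnerProductSpace

theorem MeasureTheory.L2.norm_sq_eq_integral_norm_sq {α 𝕜 F : Type*} [MeasurableSpace α]
    {μ : Measure α} [RCLike 𝕜] [NormedAddCommGroup F] [InnerProductSpace 𝕜 F]
    (u : Lp F 2 μ) : ‖u‖ ^ 2 = ∫ x, ‖u x‖ ^ 2 ∂μ := by
  rw [← inner_self_eq_norm_sq (𝕜 := 𝕜), L2.inner_def, ← integral_re (L2.integrable_inner u u)]
  simp_rw [inner_self_eq_norm_sq (𝕜 := 𝕜)]

namespace Real

variable {V E : Type*} [NormedAddCommGroup V] [InnerProductSpace ℝ V] [FiniteDimensional ℝ V]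
  [MeasurableSpace V] [BorelSpace V] [NormedAddCommGroup E] [NormedSpace ℂ E]

theorem fourier_eq_zero_of_not_integrable {f : V → E} (hf : ¬Integrable f) : 𝓕 f = 0 := by
  ext ξ
  exact integral_undef (mt (fourierIntegral_convergent_iff ξ).1 hf)

theorem fourier_continuous (f : V → E) : Continuous (𝓕 f) := by
  by_cases hf : Integrable f
  · exact VectorFourier.fourierIntegral_continuous continuous_fourierChar
      (innerSL ℝ).continuous₂ hf
  · rw [fourier_eq_zero_of_not_integrable hf]
    exact continuous_const

theorem integral_cexp_inner_mul_eq_fourier (g : V → ℂ) (t : V) :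
    ∫ x, cexp (I * (⟪x, t⟫ : ℝ)) * g x = 𝓕 g (-(2 * π)⁻¹ • t) := by
  rw [fourier_eq']
  congr 1 with x
  rw [inner_smul_right, smul_eq_mul]
  congr 2
  push_cast
  field_simp

end Real

namespace MeasureTheory.Integrable

variable {V F : Type*} [NormedAddCommGroup V] [InnerProductSpace ℝ V] [FiniteDimensional ℝ V]
  [MeasurableSpace V] [BorelSpace V]
  [NormedAddCommGroup F] [InnerProductSpace ℂ F] [CompleteSpace F]
  {f : V → F}

theorem fourier_toLp_ae_eq (hf : Integrable f) (hf2 : MemLp f 2) :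
    ((𝓕 (hf2.toLp f) : Lp F 2 (volume : Measure V)) : V → F) =ᵐ[volume] 𝓕 f := by
  refine ae_eq_of_integral_contDiff_smul_eq ((Lp.memLp _).locallyIntegrable (by norm_num))
    (Real.fourier_continuous f).locallyIntegrable fun g hg hgc => ?_
  have hG : HasCompactSupport (Complex.ofRealCLM ∘ g) := hgc.comp_left rfl
  set G : 𝓢(V, ℂ) := hG.toSchwartzMap (by fun_prop)
  calc ∫ x, g x • ((𝓕 (hf2.toLp f) : Lp F 2 (volume : Measure V)) : V → F) x
      = Lp.toTemperedDistribution (𝓕 (hf2.toLp f)) G := by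
        simp [G, Complex.coe_smul]
    _ = Lp.toTemperedDistribution (hf2.toLp f) (𝓕 G) := by
        rw [← Lp.fourier_toTemperedDistribution_eq]; rfl
    _ = ∫ x, 𝓕 G x • f x := by
        rw [Lp.toTemperedDistribution_apply]
        exact integral_congr_ae (by filter_upwards [hf2.coeFn_toLp] with x hx; rw [hx])
    _ = ∫ x, g x • 𝓕 f x := by
        have h := VectorFourier.integral_fourierIntegral_smul_eq_flip (L := innerₗ V)
          Real.continuous_fourierChar continuous_inner (G.integrable (μ := volume)) hf
        simp only [flip_innerₗ] at h
        exact h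

theorem memLp_fourier (hf : Integrable f) (hf2 : MemLp f 2) : MemLp (𝓕 f) 2 :=
  (Lp.memLp _).ae_eq (hf.fourier_toLp_ae_eq hf2)

theorem integral_norm_sq_fourier (hf : Integrable f) (hf2 : MemLp f 2) :
    ∫ ξ, ‖𝓕 f ξ‖ ^ 2 = ∫ x, ‖f x‖ ^ 2 := by
  calc ∫ ξ, ‖𝓕 f ξ‖ ^ 2
      = ‖(𝓕 (hf2.toLp f) : Lp F 2 (volume : Measure V))‖ ^ 2 := by
        rw [L2.norm_sq_eq_integral_norm_sq (𝕜 := ℂ)]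
        exact integral_congr_ae ((hf.fourier_toLp_ae_eq hf2).fun_comp (‖·‖ ^ 2)).symm
    _ = ∫ x, ‖f x‖ ^ 2 := by
        rw [Lp.norm_fourier_eq, L2.norm_sq_eq_integral_norm_sq (𝕜 := ℂ)]
        exact integral_congr_ae (hf2.coeFn_toLp.fun_comp (‖·‖ ^ 2))

end MeasureTheory.Integrable

namespace MeasureTheory.MemLp

variable {V F : Type*} [NormedAddCommGroup V] [InnerProductSpace ℝ V] [FiniteDimensional ℝ V]
  [MeasurableSpace V] [BorelSpace V]
  [NormedAddCommGroup F] [InnerProductSpace ℂ F] [CompleteSpace F]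
  {f : V → F}

theorem integrable_norm_sq_fourier (hf2 : MemLp f 2) : Integrable fun ξ => ‖𝓕 f ξ‖ ^ 2 := by
  by_cases hf : Integrable f
  · exact (hf.memLp_fourier hf2).integrable_norm_pow two_ne_zero
  · simp [Real.fourier_eq_zero_of_not_integrable hf]

theorem integral_norm_sq_fourier_le (hf2 : MemLp f 2) :
    ∫ ξ, ‖𝓕 f ξ‖ ^ 2 ≤ ∫ x, ‖f x‖ ^ 2 := by
  by_cases hf : Integrable f
  · exact (hf.integral_norm_sq_fourier hf2).le
  · simpa [Real.fourier_eq_zero_of_not_integrable hf] using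
      integral_nonneg fun x => sq_nonneg ‖f x‖

end MeasureTheory.MemLp

section KernelEstimator

variable {V : Type*} [NormedAddCommGroup V] [InnerProductSpace ℝ V] [FiniteDimensional ℝ V]
  [MeasurableSpace V] [BorelSpace V]

theorem continuous_integral_cexp_inner_mul (g : V → ℂ) :
    Continuous fun t => ∫ x, cexp (I * (⟪x, t⟫ : ℝ)) * g x := by
  simp_rw [Real.integral_cexp_inner_mul_eq_fourier]
  exact (Real.fourier_continuous g).comp (continuous_const_smul _)

theorem norm_integral_cexp_inner_mul_le_one {p : V → ℝ} (hp0 : ∀ x, 0 ≤ p x)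
    (hp1 : ∫ x, p x = 1) (t : V) : ‖∫ x, cexp (I * (⟪x, t⟫ : ℝ)) * (p x : ℂ)‖ ≤ 1 := by
  rw [Real.integral_cexp_inner_mul_eq_fourier, ← hp1]
  refine (VectorFourier.norm_fourierIntegral_le_integral_norm _ _ _ _ _).trans_eq
    (integral_congr_ae ?_)
  filter_upwards with x
  rw [Complex.norm_real, Real.norm_of_nonneg (hp0 x)]

variable {K FK : V → ℝ}

theorem sq_comp_smul_eq_norm_sq_fourier
    (hFK : ∀ t, (FK t : ℂ) = ∫ x, cexp (I * (⟪x, t⟫ : ℝ)) * (K x : ℂ)) (b : ℝ) :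
    (fun t => FK (b • t) ^ 2)
      = fun t => ‖𝓕 (fun x => (K x : ℂ)) ((-(2 * π)⁻¹ * b) • t)‖ ^ 2 := by
  ext t
  rw [mul_smul, ← Real.integral_cexp_inner_mul_eq_fourier, ← hFK, Complex.norm_real,
    Real.norm_eq_abs, sq_abs]

theorem integrable_sq_comp_smul (hK : MemLp K 2)
    (hFK : ∀ t, (FK t : ℂ) = ∫ x, cexp (I * (⟪x, t⟫ : ℝ)) * (K x : ℂ)) {b : ℝ} (hb : b ≠ 0) :
    Integrable fun t => FK (b • t) ^ 2 := by
  rw [sq_comp_smul_eq_norm_sq_fourier hFK]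
  exact hK.ofReal.integrable_norm_sq_fourier.comp_smul
    (mul_ne_zero (by simp [Real.pi_ne_zero]) hb)

theorem integral_sq_comp_smul_le (hK : MemLp K 2)
    (hFK : ∀ t, (FK t : ℂ) = ∫ x, cexp (I * (⟪x, t⟫ : ℝ)) * (K x : ℂ)) {b : ℝ} (hb : 0 < b) :
    ∫ t, FK (b • t) ^ 2 ≤ (2 * π / b) ^ Module.finrank ℝ V * ∫ x, K x ^ 2 := by
  have hscale :
      |((-(2 * π)⁻¹ * b) ^ Module.finrank ℝ V)⁻¹| = (2 * π / b) ^ Module.finrank ℝ V := by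
    rw [abs_inv, abs_pow, abs_mul, abs_neg, abs_inv, abs_of_pos Real.two_pi_pos, abs_of_pos hb,
      ← inv_pow, mul_inv, inv_inv, div_eq_mul_inv]
  rw [sq_comp_smul_eq_norm_sq_fourier hFK,
    Measure.integral_comp_smul volume (fun ξ => ‖𝓕 (fun x => (K x : ℂ)) ξ‖ ^ 2), hscale,
    smul_eq_mul]
  refine mul_le_mul_of_nonneg_left ?_ (by positivity)
  simpa [Complex.norm_real, sq_abs] using (hK.ofReal (K := ℂ)).integral_norm_sq_fourier_le

theorem integral_one_sub_mul_sq_comp_smul_le (hK : MemLp K 2)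
    (hFK : ∀ t, (FK t : ℂ) = ∫ x, cexp (I * (⟪x, t⟫ : ℝ)) * (K x : ℂ)) {P : V → ℝ}
    (hP0 : ∀ t, 0 ≤ P t) (hP1 : ∀ t, P t ≤ 1) {b : ℝ} (hb : 0 < b) :
    ∫ t, (1 - P t) * FK (b • t) ^ 2 ≤ (2 * π / b) ^ Module.finrank ℝ V * ∫ x, K x ^ 2 :=
  (integral_mono_of_nonneg
    (ae_of_all _ fun t => mul_nonneg (by linarith [hP1 t]) (sq_nonneg _))
    (integrable_sq_comp_smul hK hFK hb.ne')
    (ae_of_all _ fun t => mul_le_of_le_one_left (sq_nonneg _) (by linarith [hP0 t]))).trans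
    (integral_sq_comp_smul_le hK hFK hb)

end KernelEstimator

section BiasVariance

variable {α : Type*} [MeasurableSpace α] {μ : Measure α} {a b P : α → ℝ}

theorem integrable_bias_iff (ha : AEStronglyMeasurable a μ) (hb : AEStronglyMeasurable b μ)
    (hP : AEStronglyMeasurable P μ) (ha0 : ∀ x, 0 ≤ a x) (hab : ∀ x, a x ≤ b x)
    (hb1 : ∀ x, b x ≤ 1) (hP0 : ∀ x, 0 ≤ P x) (hP1 : ∀ x, P x ≤ 1)
    (hb2 : Integrable (fun x => b x ^ 2) μ) :
    Integrable (fun x => (1 - a x) ^ 2 * P x) μ ↔ Integrable (fun x => (1 - b x) ^ 2 * P x) μ := by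
  have hmeas : ∀ g : α → ℝ, AEStronglyMeasurable g μ →
      AEStronglyMeasurable (fun x => (1 - g x) ^ 2 * P x) μ := fun g hg =>
    ((aestronglyMeasurable_const.sub hg).pow 2).mul hP
  refine ⟨fun h => h.mono' (hmeas b hb) (ae_of_all _ fun x => ?_),
    fun h => ((h.const_mul 2).add (hb2.const_mul 2)).mono' (hmeas a ha)
      (ae_of_all _ fun x => ?_)⟩
  · rw [Real.norm_of_nonneg (by have := hP0 x; positivity)]
    have : (1 - b x) ^ 2 ≤ (1 - a x) ^ 2 := by nlinarith [ha0 x, hab x, hb1 x]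
    exact mul_le_mul_of_nonneg_right this (hP0 x)
  · rw [Real.norm_of_nonneg (by have := hP0 x; positivity), Pi.add_apply]
    have h1 : (1 - a x) ^ 2 ≤ 2 * (1 - b x) ^ 2 + 2 * b x ^ 2 := by
      nlinarith [sq_nonneg (1 - 2 * b x),
        mul_nonneg (ha0 x) (sub_nonneg.2 ((hab x).trans (hb1 x)))]
    nlinarith [mul_le_mul_of_nonneg_right h1 (hP0 x),
      mul_le_mul_of_nonneg_left (hP1 x) (sq_nonneg (b x))]

theorem integral_bias_variance_le {c : ℝ} (hc : 0 ≤ c) (ha : AEStronglyMeasurable a μ)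
    (hb : AEStronglyMeasurable b μ) (hP : AEStronglyMeasurable P μ) (ha0 : ∀ x, 0 ≤ a x)
    (hab : ∀ x, a x ≤ b x) (hb1 : ∀ x, b x ≤ 1) (hP0 : ∀ x, 0 ≤ P x) (hP1 : ∀ x, P x ≤ 1)
    (hb2 : Integrable (fun x => b x ^ 2) μ) :
    ∫ x, ((1 - b x) ^ 2 * P x + c * (1 - P x) * b x ^ 2) ∂μ
        - c * ∫ x, (1 - P x) * b x ^ 2 ∂μ
      ≤ ∫ x, ((1 - a x) ^ 2 * P x + c * (1 - P x) * a x ^ 2) ∂μ := by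
  have hvar : ∀ g : α → ℝ, AEStronglyMeasurable g μ → (∀ x, 0 ≤ g x) → (∀ x, g x ≤ b x) →
      Integrable (fun x => c * (1 - P x) * g x ^ 2) μ := fun g hg hg0 hgb =>
    (hb2.const_mul c).mono' ((aestronglyMeasurable_const.mul
      (aestronglyMeasurable_const.sub hP)).mul (hg.pow 2)) (ae_of_all _ fun x => by
        have hg2 : g x ^ 2 ≤ b x ^ 2 := pow_le_pow_left₀ (hg0 x) (hgb x) 2
        rw [Real.norm_of_nonneg (by have := hP1 x; positivity), mul_assoc]
        exact mul_le_mul_of_nonneg_left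
          ((mul_le_of_le_one_left (sq_nonneg _) (by linarith [hP0 x])).trans hg2) hc)
  have hvar_a := hvar a ha ha0 hab
  have hvar_b := hvar b hb (fun x => (ha0 x).trans (hab x)) fun x => le_rfl
  have hvar_b_nonneg : 0 ≤ c * ∫ x, (1 - P x) * b x ^ 2 ∂μ :=
    mul_nonneg hc (integral_nonneg fun x => mul_nonneg (by linarith [hP1 x]) (sq_nonneg _))
  -- If the bias terms are not integrable, both risk integrals take the junk value `0`.
  by_cases hbias_b : Integrable (fun x => (1 - b x) ^ 2 * P x) μ
  · have hbias_a := (integrable_bias_iff ha hb hP ha0 hab hb1 hP0 hP1 hb2).2 hbias_b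
    rw [integral_add hbias_b hvar_b, integral_add hbias_a hvar_a, ← integral_const_mul]
    simp_rw [← mul_assoc]
    have : ∫ x, (1 - b x) ^ 2 * P x ∂μ ≤ ∫ x, (1 - a x) ^ 2 * P x ∂μ :=
      integral_mono hbias_b hbias_a fun x => mul_le_mul_of_nonneg_right
        (by nlinarith [ha0 x, hab x, hb1 x]) (hP0 x)
    have : 0 ≤ ∫ x, c * (1 - P x) * a x ^ 2 ∂μ :=
      integral_nonneg fun x => mul_nonneg (mul_nonneg hc (by linarith [hP1 x])) (sq_nonneg _)
    linarith
  · have hbias_a := mt (integrable_bias_iff ha hb hP ha0 hab hb1 hP0 hP1 hb2).1 hbias_b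
    have hrisk_b : ¬Integrable (fun x => (1 - b x) ^ 2 * P x + c * (1 - P x) * b x ^ 2) μ :=
      fun h => hbias_b ((integrable_add_iff_integrable_left hvar_b).1 h)
    have hrisk_a : ¬Integrable (fun x => (1 - a x) ^ 2 * P x + c * (1 - P x) * a x ^ 2) μ :=
      fun h => hbias_a ((integrable_add_iff_integrable_left hvar_a).1 h)
    rw [integral_undef hrisk_b, integral_undef hrisk_a]
    linarith

end BiasVariance

theorem mise_monotone_comparison_general
    (d n : ℕ) (h h' : ℝ) (hh' : 0 < h') (hhh : h' < h)
    (p : EuclideanSpace ℝ (Fin d) → ℝ)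
    (hp_nonneg : ∀ x, 0 ≤ p x)
    (hp_int : (∫ x, p x) = 1)
    (φ : EuclideanSpace ℝ (Fin d) → ℂ)
    (hφ : ∀ t, φ t = ∫ x, Complex.exp (Complex.I * (⟪x, t⟫ : ℝ)) * (p x : ℂ))
    (K : EuclideanSpace ℝ (Fin d) → ℝ) (hK : MemLp K 2 volume)
    (FK : EuclideanSpace ℝ (Fin d) → ℝ)
    (hFK : ∀ t, (FK t : ℂ) = ∫ x, Complex.exp (Complex.I * (⟪x, t⟫ : ℝ)) * (K x : ℂ))
    (hFK01 : ∀ t, FK t ∈ Set.Icc (0 : ℝ) 1)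
    (hmono : ∀ (t : EuclideanSpace ℝ (Fin d)) (a b : ℝ), 0 < b → b < a →
        FK (a • t) ≤ FK (b • t))
    (R : ℝ → ℝ)
    (hR : ∀ b : ℝ, R b = (1 / (2 * Real.pi) ^ d) *
        ∫ t, ((1 - FK (b • t)) ^ 2 * ‖φ t‖ ^ 2
          + (1 / (n : ℝ)) * (1 - ‖φ t‖ ^ 2) * (FK (b • t)) ^ 2)) :
    R h ≥ R h' - (1 / ((n : ℝ) * (2 * Real.pi) ^ d)) *
        (∫ t, (1 - ‖φ t‖ ^ 2) * (FK (h' • t)) ^ 2) ∧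
    R h' - (1 / ((n : ℝ) * (2 * Real.pi) ^ d)) *
        (∫ t, (1 - ‖φ t‖ ^ 2) * (FK (h' • t)) ^ 2)
      ≥ R h' - (∫ x, (K x) ^ 2) / (n * h' ^ (d : ℝ)) := by
  have hφc : Continuous φ := funext hφ ▸ continuous_integral_cexp_inner_mul _
  have hφ1 : ∀ t, ‖φ t‖ ^ 2 ≤ 1 := fun t =>
    pow_le_one₀ (norm_nonneg _) (hφ t ▸ norm_integral_cexp_inner_mul_le_one hp_nonneg hp_int t)
  have hFKc : Continuous FK :=
    (Complex.continuous_re.comp (continuous_integral_cexp_inner_mul fun x => (K x : ℂ))).congr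
      fun t => by simp [← hFK]
  have hFKs : ∀ b : ℝ, AEStronglyMeasurable (fun t => FK (b • t)) :=
    fun b => (hFKc.comp (continuous_const_smul b)).aestronglyMeasurable
  constructor
  · have hbias := mul_le_mul_of_nonneg_left (integral_bias_variance_le (c := 1 / (n : ℝ))
      (P := fun t => ‖φ t‖ ^ 2) (by positivity) (hFKs h) (hFKs h')
      (hφc.norm.pow 2).aestronglyMeasurable
      (fun t => (hFK01 _).1) (fun t => hmono t h h' hh' hhh) (fun t => (hFK01 _).2)
      (fun t => by positivity) hφ1 (integrable_sq_comp_smul hK hFK hh'.ne'))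
      (by positivity : (0 : ℝ) ≤ 1 / (2 * π) ^ d)
    rw [mul_sub, ← mul_assoc, one_div_mul_one_div_rev] at hbias
    rwa [hR, hR, ge_iff_le]
  · rw [ge_iff_le, sub_le_sub_iff_left]
    calc _ ≤ 1 / ((n : ℝ) * (2 * π) ^ d) * ((2 * π / h') ^ d * ∫ x, K x ^ 2) := by
          refine mul_le_mul_of_nonneg_left ?_ (by positivity)
          simpa using integral_one_sub_mul_sq_comp_smul_le hK hFK
            (fun t => sq_nonneg ‖φ t‖) hφ1 hh'
      _ = (∫ x, K x ^ 2) / (n * h' ^ (d : ℝ)) := by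
          rw [Real.rpow_natCast, div_pow]
          field_simp

theorem mise_monotone_comparison
    (d n : ℕ) (hn : 0 < n) (h h' : ℝ) (hh' : 0 < h') (hhh : h' < h)
    (p : EuclideanSpace ℝ (Fin d) → ℝ)
    (hp_nonneg : ∀ x, 0 ≤ p x) (hp_meas : Measurable p)
    (hp_int : (∫ x, p x) = 1)
    (φ : EuclideanSpace ℝ (Fin d) → ℂ)
    (hφ : ∀ t, φ t = ∫ x, Complex.exp (Complex.I * (⟪x, t⟫ : ℝ)) * (p x : ℂ))
    (K : EuclideanSpace ℝ (Fin d) → ℝ) (hK : MemLp K 2 volume)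
    (FK : EuclideanSpace ℝ (Fin d) → ℝ)
    (hFK : ∀ t, (FK t : ℂ) = ∫ x, Complex.exp (Complex.I * (⟪x, t⟫ : ℝ)) * (K x : ℂ))
    (hFK01 : ∀ t, FK t ∈ Set.Icc (0 : ℝ) 1)
    (hmono : ∀ (t : EuclideanSpace ℝ (Fin d)) (a b : ℝ), 0 < b → b < a →
        FK (a • t) ≤ FK (b • t))
    (R : ℝ → ℝ)
    (hR : ∀ b : ℝ, R b = (1 / (2 * Real.pi) ^ d) *
        ∫ t, ((1 - FK (b • t)) ^ 2 * ‖φ t‖ ^ 2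
          + (1 / (n : ℝ)) * (1 - ‖φ t‖ ^ 2) * (FK (b • t)) ^ 2)) :
    R h ≥ R h' - (1 / ((n : ℝ) * (2 * Real.pi) ^ d)) *
        (∫ t, (1 - ‖φ t‖ ^ 2) * (FK (h' • t)) ^ 2) ∧
    R h' - (1 / ((n : ℝ) * (2 * Real.pi) ^ d)) *
        (∫ t, (1 - ‖φ t‖ ^ 2) * (FK (h' • t)) ^ 2)
      ≥ R h' - (∫ x, (K x) ^ 2) / (n * h' ^ (d : ℝ)) :=
  mise_monotone_comparison_general d n h h' hh' hhh p hp_nonneg hp_int φ hφ K hK FK hFK hFK01 hmono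
    R hR
end
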